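/- arXiv:1505.08121 — 2 statements merged into one kernel-verified Lean document; each statement's English description precedes it below -/
import Mathlib

section
/- For every odd integer m ≥ 3, the graph obtained from C_m[4] by removing a suitable perfect matching I and adding, for each i ∈ Z_m, the six edges of a complete graph K_4 on the column {(a,i) : a ∈ Z_4}, admits a 2-factorization into two C_4-factors and three C_m-factors. Explicitly, with I = {{(0,i),(2,i+1)} : i ∈ Z_m} ∪ {{(3,i),(1,i+1)} : i ∈ Z_m}, the graph (C_m[4] − I) ⊕ mK_4 has a 2-factorization into two spanning unions of m disjoint 4-cycles and three spanning unions of four disjoint m-cycles. -/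
open SimpleGraph

/-- `F` is a decomposition of the graph `G` into edge-disjoint subgraphs. -/
def IsDecompositionF {V : Type*} {n : ℕ} (G : SimpleGraph V) (F : Fin n → SimpleGraph V) : Prop :=
  (∀ i, F i ≤ G) ∧ (∀ i j, i ≠ j → F i ⊓ F j = ⊥) ∧ (⨆ i, F i) = G

/-- `H` is a `C_k`-factor of `G`: a spanning 2-regular subgraph all of whose
connected components have `k` vertices (hence are `k`-cycles). -/
def IsCnFactor {V : Type*} (G H : SimpleGraph V) (k : ℕ) : Prop :=
  H ≤ G ∧ (∀ v, (H.neighborSet v).ncard = 2) ∧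
    ∀ v, (H.connectedComponentMk v).supp.ncard = k

/-- `H` is a perfect matching (1-factor) of `G`. -/
def IsPM {V : Type*} (G H : SimpleGraph V) : Prop :=
  H ≤ G ∧ ∀ v, (H.neighborSet v).ncard = 1

/-- The lexicographic blow-up `C_m[4]`: the Cayley graph on `ZMod 4 × ZMod m`
with connection set `ZMod 4 × {1, -1}`. -/
def Cm4 (m : ℕ) : SimpleGraph (ZMod 4 × ZMod m) :=
  SimpleGraph.fromRel (fun u v => v.2 - u.2 = 1)

/-- The blow-up `G[k]`: replace every vertex by `k` independent vertices. -/
def blowup {V : Type*} (G : SimpleGraph V) (k : ℕ) : SimpleGraph (V × Fin k) where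
  Adj u v := G.Adj u.1 v.1
  symm := ⟨fun _ _ h => G.symm.symm _ _ h⟩
  loopless := ⟨fun u h => G.loopless.irrefl u.1 h⟩

/-- The explicit perfect matching `I` of `C_m[4]` with edges
`{(0,i),(2,i+1)}` and `{(3,i),(1,i+1)}` for `i ∈ Z_m`. -/
def Imatch (m : ℕ) : SimpleGraph (ZMod 4 × ZMod m) :=
  SimpleGraph.fromRel (fun u v =>
    ((u.1 = 0 ∧ v.1 = 2) ∨ (u.1 = 3 ∧ v.1 = 1)) ∧ v.2 = u.2 + 1)

/-- `m·K_4`: for each `i ∈ Z_m`, a complete graph on the column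
`{(a,i) : a ∈ Z_4}`. -/
def colK4 (m : ℕ) : SimpleGraph (ZMod 4 × ZMod m) :=
  SimpleGraph.fromRel (fun u v => u.2 = v.2)

/-!
Between consecutive columns `i` and `i + 1` sort the sixteen pairs `(a, i) (b, i + 1)` by the
difference `b - a ∈ ℤ/4`. The four pairs of difference `2` are the two edges of `I` and the two
edges `(1, i) (3, i + 1)`, `(2, i) (0, i + 1)`; the latter, with the column edges `{1, 2}` and
`{0, 3}`, form the 4-cycles `(1, i) (2, i) (0, i + 1) (3, i + 1)`, and the remaining column edges
form the 4-cycle `0 1 3 2` in every column. The pairs of difference `0, 1, -1` are shared by three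
shift factors, the `k`-th joining `(a, i)` to `(a + d_k i, i + 1)`, where `(d_0 i, d_1 i, d_2 i)`
is a permutation of `(0, 1, -1)`. When `d_k i = s_k (i + 1) - s_k i` for a potential
`s_k : ℤ/m → ℤ/4`, the shift factor is the union of the `m`-cycles `{(c + s_k i, i)}`. Potentials
depending only on whether `i` is zero, odd or even and nonzero work, since for odd `m` the
wrap-around step `m - 1 → 0` starts at an even index.
-/

namespace SimpleGraph

variable {V β : Type*} {G : SimpleGraph V}

theorem Reachable.apply_eq_of_forall_adj {f : V → β} (hf : ∀ x y, G.Adj x y → f x = f y)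
    {u v : V} (h : G.Reachable u v) : f u = f v := by
  have h' := (reachable_iff_reflTransGen u v).1 h
  clear h
  induction h' with
  | refl => rfl
  | tail _ hxy ih => exact ih.trans (hf _ _ hxy)

theorem supp_connectedComponentMk_eq_preimage (f : V → β) (hf : ∀ x y, G.Adj x y → f x = f y)
    (base : β → V) (hbase : ∀ w, G.Reachable (base (f w)) w) (v : V) :
    (G.connectedComponentMk v).supp = f ⁻¹' {f v} := by
  ext w
  simp only [ConnectedComponent.mem_supp_iff, ConnectedComponent.eq, Set.mem_preimage,
    Set.mem_singleton_iff]
  refine ⟨fun h => h.apply_eq_of_forall_adj hf, fun h => ?_⟩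
  have hw := hbase w
  rw [h] at hw
  exact hw.symm.trans (hbase v)

end SimpleGraph

theorem one_ne_zero_of_two_ne_zero {R : Type*} [AddMonoidWithOne R] (h2 : (2 : R) ≠ 0) :
    (1 : R) ≠ 0 :=
  fun h => h2 (by rw [← one_add_one_eq_two, h, add_zero])

theorem ZMod.two_ne_zero_of_three_le {m : ℕ} (hm : 3 ≤ m) : (2 : ZMod m) ≠ 0 := by
  intro h
  have := (ZMod.natCast_eq_zero_iff 2 m).1 (by exact_mod_cast h)
  exact absurd (Nat.le_of_dvd two_pos this) (by omega)

section LayerGraph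

variable {A : Type*} {m : ℕ}

/-- Vertex `(a, i)` is `a` in column `i`: the edges from column `i` to column `i + 1` follow
`R i`, and every column carries a copy of `H`. -/
def layerGraph (R : ZMod m → A → A → Prop) (H : SimpleGraph A) : SimpleGraph (A × ZMod m) :=
  fromRel fun u v => (v.2 = u.2 + 1 ∧ R u.2 u.1 v.1) ∨ (v.2 = u.2 ∧ H.Adj u.1 v.1)

variable {R R' : ZMod m → A → A → Prop} {H H' : SimpleGraph A}

theorem layerGraph_adj (h1 : (1 : ZMod m) ≠ 0) {u v : A × ZMod m} :
    (layerGraph R H).Adj u v ↔ (v.2 = u.2 + 1 ∧ R u.2 u.1 v.1) ∨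
      (u.2 = v.2 + 1 ∧ R v.2 v.1 u.1) ∨ (v.2 = u.2 ∧ H.Adj u.1 v.1) := by
  have hne : ∀ x : ZMod m, x + 1 ≠ x := fun x h => h1 (by simpa using h)
  rw [layerGraph, fromRel_adj]
  constructor
  · rintro ⟨-, (h | h) | (h | ⟨h, hH⟩)⟩
    · exact .inl h
    · exact .inr (.inr h)
    · exact .inr (.inl h)
    · exact .inr (.inr ⟨h.symm, hH.symm⟩)
  · rintro (h | h | h)
    · exact ⟨by rintro rfl; exact hne _ h.1.symm, .inl (.inl h)⟩
    · exact ⟨by rintro rfl; exact hne _ h.1.symm, .inr (.inl h)⟩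
    · exact ⟨by rintro rfl; exact H.loopless.irrefl _ h.2, .inl (.inr h)⟩

theorem layerGraph_adj_of_rel (h1 : (1 : ZMod m) ≠ 0) {i : ZMod m} {a b : A} (h : R i a b) :
    (layerGraph R H).Adj (a, i) (b, i + 1) :=
  (layerGraph_adj h1).2 (.inl ⟨rfl, h⟩)

theorem layerGraph_adj_of_adj {i : ZMod m} {a b : A} (h : H.Adj a b) :
    (layerGraph R H).Adj (a, i) (b, i) :=
  (fromRel_adj _ _ _).2 ⟨fun e => H.ne_of_adj h (congrArg Prod.fst e), .inl (.inr ⟨rfl, h⟩)⟩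

theorem layerGraph_mono (hR : ∀ i a b, R i a b → R' i a b) (hH : H ≤ H') :
    layerGraph R H ≤ layerGraph R' H' := by
  intro u v
  simp only [layerGraph, fromRel_adj]
  have hH' : ∀ a b, H.Adj a b → H'.Adj a b := fun _ _ h => hH h
  rintro ⟨hne, h⟩
  exact ⟨hne, by grind⟩

theorem layerGraph_sup :
    layerGraph R H ⊔ layerGraph R' H' =
      layerGraph (fun i a b => R i a b ∨ R' i a b) (H ⊔ H') := by
  ext u v
  simp only [layerGraph, sup_adj, fromRel_adj]
  grind

theorem layerGraph_sdiff (h2 : (2 : ZMod m) ≠ 0) :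
    layerGraph R H \ layerGraph R' H' =
      layerGraph (fun i a b => R i a b ∧ ¬ R' i a b) (H \ H') := by
  have h1 := one_ne_zero_of_two_ne_zero h2
  ext u v
  simp only [sdiff_adj, layerGraph_adj h1]
  grind

theorem isDecompositionF_layerGraph (h2 : (2 : ZMod m) ≠ 0) {n : ℕ}
    {R' : Fin n → ZMod m → A → A → Prop} {H' : Fin n → SimpleGraph A}
    (hR : ∀ i a b, R i a b ↔ ∃ k, R' k i a b)
    (hR' : ∀ i a b k l, R' k i a b → R' l i a b → k = l)
    (hH : ∀ a b, H.Adj a b ↔ ∃ k, (H' k).Adj a b)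
    (hH' : ∀ a b k l, (H' k).Adj a b → (H' l).Adj a b → k = l) :
    IsDecompositionF (layerGraph R H) fun k => layerGraph (R' k) (H' k) := by
  have h1 := one_ne_zero_of_two_ne_zero h2
  refine ⟨fun k => layerGraph_mono (fun i a b h => (hR i a b).2 ⟨k, h⟩)
    (fun a b h => (hH a b).2 ⟨k, h⟩), fun k l hkl => ?_, ?_⟩
  · ext u v
    simp only [inf_adj, bot_adj, iff_false, not_and, layerGraph_adj h1]
    grind
  · ext u v
    simp only [iSup_adj, layerGraph_adj h1, hR, hH]
    grind

theorem ncard_neighborSet_layerGraph [Finite A] (h2 : (2 : ZMod m) ≠ 0) (v : A × ZMod m) :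
    ((layerGraph R H).neighborSet v).ncard =
      {b | R v.2 v.1 b}.ncard + {b | R (v.2 - 1) b v.1}.ncard + (H.neighborSet v.1).ncard := by
  have h1 := one_ne_zero_of_two_ne_zero h2
  have hnb : (layerGraph R H).neighborSet v =
      (·, v.2 + 1) '' {b | R v.2 v.1 b} ∪ (·, v.2 - 1) '' {b | R (v.2 - 1) b v.1} ∪
        (·, v.2) '' H.neighborSet v.1 := by
    ext ⟨b, j⟩
    simp only [mem_neighborSet, layerGraph_adj h1, Set.mem_union, Set.mem_image,
      Set.mem_ofPred_eq, Prod.mk.injEq]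
    grind
  have hdisj : ∀ {j j' : ZMod m} (s t : Set A), j ≠ j' →
      Disjoint ((·, j) '' s) ((·, j') '' t) := by
    rintro j j' s t hj
    rw [Set.disjoint_left]
    rintro _ ⟨a, -, rfl⟩ ⟨b, -, hb⟩
    exact hj (congrArg Prod.snd hb).symm
  rw [hnb, Set.ncard_union_eq, Set.ncard_union_eq,
    Set.ncard_image_of_injective _ (Prod.mk_left_injective _),
    Set.ncard_image_of_injective _ (Prod.mk_left_injective _),
    Set.ncard_image_of_injective _ (Prod.mk_left_injective _)]
  · exact hdisj _ _ fun h => h2 (by linear_combination h)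
  · refine Set.disjoint_union_left.2 ⟨hdisj _ _ fun h => h1 ?_, hdisj _ _ fun h => h1 ?_⟩
    · linear_combination h
    · linear_combination -h

theorem layerGraph_apply_eq_of_adj {β : Type*} {f : A × ZMod m → β}
    (hR : ∀ i a b, R i a b → f (a, i) = f (b, i + 1))
    (hH : ∀ i a b, H.Adj a b → f (a, i) = f (b, i)) {u v : A × ZMod m}
    (h : (layerGraph R H).Adj u v) : f u = f v := by
  obtain ⟨a, i⟩ := u
  obtain ⟨b, j⟩ := v
  obtain ⟨-, (⟨rfl, hr⟩ | ⟨rfl, ha⟩) | (⟨rfl, hr⟩ | ⟨rfl, ha⟩)⟩ := (fromRel_adj _ _ _).1 h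
  · exact hR _ _ _ hr
  · exact hH _ _ _ ha
  · exact (hR _ _ _ hr).symm
  · exact (hH _ _ _ ha).symm

/-- The components are the transversals `{(a, j - e a) | a}`. -/
theorem ncard_supp_layerGraph_of_offset (e : A → ZMod m)
    (hR : ∀ i a b, R i a b → e a = 1 + e b) (hH : ∀ a b, H.Adj a b → e a = e b) (a₀ : A)
    (hreach : ∀ j a, (layerGraph R H).Reachable (a₀, j - e a₀) (a, j - e a))
    (v : A × ZMod m) : ((layerGraph R H).connectedComponentMk v).supp.ncard = Nat.card A := by
  have hf : ∀ x y, (layerGraph R H).Adj x y → x.2 + e x.1 = y.2 + e y.1 := fun x y =>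
    layerGraph_apply_eq_of_adj (f := fun w => w.2 + e w.1)
      (fun i a b h => by simp only [hR i a b h]; abel) (fun i a b h => by simp only [hH a b h])
  rw [supp_connectedComponentMk_eq_preimage _ hf (fun j => (a₀, j - e a₀))
    (fun w => by simpa using hreach (w.2 + e w.1) w.1)]
  have : (fun w : A × ZMod m => w.2 + e w.1) ⁻¹' {v.2 + e v.1} =
      Set.range fun a => (a, v.2 + e v.1 - e a) := by
    ext ⟨a, i⟩
    simp [Prod.ext_iff, eq_sub_iff_add_eq, eq_comm]
  rw [this, Set.ncard_range_of_injective fun a b h => congrArg Prod.fst h]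

end LayerGraph

section ShiftGraph

variable {A : Type*} [AddCommGroup A] {m : ℕ}

def shiftGraph (s : ZMod m → A) : SimpleGraph (A × ZMod m) :=
  layerGraph (fun i a b => b = a + (s (i + 1) - s i)) ⊥

theorem ncard_neighborSet_shiftGraph [Finite A] (h2 : (2 : ZMod m) ≠ 0) (s : ZMod m → A)
    (v : A × ZMod m) : ((shiftGraph s).neighborSet v).ncard = 2 := by
  have hback : ∀ a d : A, {b | a = b + d} = {a - d} := fun a d => by
    ext b
    simp [eq_sub_iff_add_eq, eq_comm]
  rw [shiftGraph, ncard_neighborSet_layerGraph h2, hback, Set.ofPred_eq_eq_singleton,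
    neighborSet_bot, Set.ncard_singleton, Set.ncard_singleton, Set.ncard_empty]

theorem ncard_supp_shiftGraph [NeZero m] (h1 : (1 : ZMod m) ≠ 0) (s : ZMod m → A)
    (v : A × ZMod m) : ((shiftGraph s).connectedComponentMk v).supp.ncard = m := by
  have hf : ∀ x y, (shiftGraph s).Adj x y → x.1 - s x.2 = y.1 - s y.2 := fun x y =>
    layerGraph_apply_eq_of_adj (f := fun w => w.1 - s w.2)
      (fun i a b h => by simp only [h]; abel) (fun _ _ _ h => by simp at h)
  have hstep : ∀ (c : A) (i : ZMod m), (shiftGraph s).Adj (c + s i, i) (c + s (i + 1), i + 1) :=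
    fun c i => layerGraph_adj_of_rel h1 (by abel)
  have hwalk : ∀ (c : A) (n : ℕ), (shiftGraph s).Reachable (c + s 0, 0) (c + s n, n) := by
    intro c n
    induction n with
    | zero => simp
    | succ n ih => simpa using ih.trans (hstep c n).reachable
  rw [supp_connectedComponentMk_eq_preimage _ hf (fun c => (c + s 0, 0))
    (fun w => by simpa using hwalk (w.1 - s w.2) w.2.val)]
  have : (fun w : A × ZMod m => w.1 - s w.2) ⁻¹' {v.1 - s v.2} =
      Set.range fun i => (v.1 - s v.2 + s i, i) := by
    ext ⟨a, i⟩
    simp only [Set.mem_preimage, Set.mem_singleton_iff, Set.mem_range, Prod.ext_iff,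
      exists_eq_right]
    constructor <;> intro h <;> rw [← h] <;> abel
  rw [this, Set.ncard_range_of_injective fun i j h => congrArg Prod.snd h, Nat.card_zmod]

end ShiftGraph

section ParityClass

def parityClass (n : ℕ) : Fin 3 :=
  if n = 0 then 0 else if Even n then 2 else 1

def parityClassSteps : Finset (Fin 3 × Fin 3) := {(0, 1), (1, 2), (2, 1), (2, 0)}

theorem parityClass_mem_parityClassSteps {m n : ℕ} (hm : 3 ≤ m) (hmo : Odd m) (hn : n < m) :
    (parityClass n, parityClass ((n + 1) % m)) ∈ parityClassSteps := by
  rcases (show n + 1 ≤ m from hn).lt_or_eq with h | h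
  · rw [Nat.mod_eq_of_lt h]
    by_cases hn0 : n = 0
    · subst hn0
      decide
    · rcases Nat.even_or_odd n with he | ho
      · simp [parityClass, parityClassSteps, hn0, he, Nat.even_add_one]
      · simp [parityClass, parityClassSteps, hn0, Nat.not_even_iff_odd.2 ho, Nat.even_add_one]
  · have he : Even n := by
      have : ¬Even (n + 1) := h ▸ Nat.not_even_iff_odd.2 hmo
      simpa [Nat.even_add_one] using this
    rw [h, Nat.mod_self]
    simp [parityClass, parityClassSteps, he]
    omega

theorem parityClass_val_mem_parityClassSteps {m : ℕ} (hm : 3 ≤ m) (hmo : Odd m) (i : ZMod m) :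
    (parityClass i.val, parityClass (i + 1).val) ∈ parityClassSteps := by
  have : Fact (1 < m) := ⟨by omega⟩
  rw [ZMod.val_add, ZMod.val_one]
  exact parityClass_mem_parityClassSteps hm hmo (ZMod.val_lt i)

end ParityClass

section Factors

abbrev matchPattern (a b : ZMod 4) : Prop := (a = 0 ∧ b = 2) ∨ (a = 3 ∧ b = 1)

abbrev crossPattern (a b : ZMod 4) : Prop := (a = 1 ∧ b = 3) ∨ (a = 2 ∧ b = 0)

abbrev crossColumn : SimpleGraph (ZMod 4) := fromRel fun a b => (a = 1 ∧ b = 2) ∨ (a = 0 ∧ b = 3)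

abbrev cycleColumn : SimpleGraph (ZMod 4) :=
  fromRel fun a b => (a = 0 ∧ b = 1) ∨ (a = 1 ∧ b = 3) ∨ (a = 3 ∧ b = 2) ∨ (a = 2 ∧ b = 0)

/-- `potential k c` is the potential of the `k`-th shift factor on the parity class `c`. Along
each step in `parityClassSteps` the three increments are `0, 1, 3` in some order. -/
def potential : Fin 3 → Fin 3 → ZMod 4 := ![![0, 0, 1], ![0, 1, 0], ![0, 3, 3]]

def cyclePotential {m : ℕ} (k : Fin 3) (i : ZMod m) : ZMod 4 := potential k (parityClass i.val)

def crossFactor (m : ℕ) : SimpleGraph (ZMod 4 × ZMod m) :=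
  layerGraph (fun _ => crossPattern) crossColumn

def crossOffset {m : ℕ} (a : ZMod 4) : ZMod m := if a = 0 ∨ a = 3 then -1 else 0

def columnFactor (m : ℕ) : SimpleGraph (ZMod 4 × ZMod m) :=
  layerGraph (fun _ _ _ => False) cycleColumn

def factor (m : ℕ) : Fin 5 → SimpleGraph (ZMod 4 × ZMod m)
  | 0 => crossFactor m
  | 1 => columnFactor m
  | 2 => shiftGraph (cyclePotential 0)
  | 3 => shiftGraph (cyclePotential 1)
  | 4 => shiftGraph (cyclePotential 2)

def forwardPart (c c' : Fin 3) : Fin 5 → ZMod 4 → ZMod 4 → Prop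
  | 0 => crossPattern
  | 1 => fun _ _ => False
  | 2 => fun a b => b = a + (potential 0 c' - potential 0 c)
  | 3 => fun a b => b = a + (potential 1 c' - potential 1 c)
  | 4 => fun a b => b = a + (potential 2 c' - potential 2 c)

instance (c c' : Fin 3) (k : Fin 5) : DecidableRel (forwardPart c c' k) := by
  unfold forwardPart
  split <;> infer_instance

def columnPart : Fin 5 → SimpleGraph (ZMod 4)
  | 0 => crossColumn
  | 1 => cycleColumn
  | _ => ⊥

instance (k : Fin 5) : DecidableRel (columnPart k).Adj := by
  unfold columnPart
  split <;> infer_instance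

theorem factor_eq_layerGraph (m : ℕ) (k : Fin 5) :
    factor m k = layerGraph (fun i => forwardPart (parityClass i.val) (parityClass (i + 1).val) k)
      (columnPart k) := by
  fin_cases k <;> rfl

theorem forwardPart_partition : ∀ c ∈ parityClassSteps, ∀ a b : ZMod 4,
    (¬ matchPattern a b ↔ ∃ k, forwardPart c.1 c.2 k a b) ∧
      ∀ k l, forwardPart c.1 c.2 k a b → forwardPart c.1 c.2 l a b → k = l := by
  decide

theorem columnPart_partition : ∀ a b : ZMod 4,
    ((⊤ : SimpleGraph (ZMod 4)).Adj a b ↔ ∃ k, (columnPart k).Adj a b) ∧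
      ∀ k l, (columnPart k).Adj a b → (columnPart l).Adj a b → k = l := by
  decide

end Factors

section Main

variable {m : ℕ}

theorem Cm4_eq_layerGraph : Cm4 m = layerGraph (fun _ _ _ => True) ⊥ := by
  ext u v
  simp only [Cm4, layerGraph, fromRel_adj, sub_eq_iff_eq_add', bot_adj, and_true, and_false,
    or_false]

theorem Imatch_eq_layerGraph : Imatch m = layerGraph (fun _ => matchPattern) ⊥ := by
  ext u v
  simp only [Imatch, layerGraph, fromRel_adj, bot_adj, and_false, or_false]
  grind

theorem colK4_eq_layerGraph : colK4 m = layerGraph (fun _ _ _ => False) ⊤ := by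
  ext u v
  simp only [colK4, layerGraph, fromRel_adj, top_adj, and_false, false_or]
  grind

theorem Cm4_sdiff_Imatch_sup_colK4 (h2 : (2 : ZMod m) ≠ 0) :
    (Cm4 m \ Imatch m) ⊔ colK4 m = layerGraph (fun _ a b => ¬ matchPattern a b) ⊤ := by
  rw [Cm4_eq_layerGraph, Imatch_eq_layerGraph, colK4_eq_layerGraph, layerGraph_sdiff h2,
    layerGraph_sup]
  simp

theorem isPM_Cm4_Imatch (h2 : (2 : ZMod m) ≠ 0) : IsPM (Cm4 m) (Imatch m) := by
  refine ⟨?_, fun v => ?_⟩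
  · rw [Cm4_eq_layerGraph, Imatch_eq_layerGraph]
    exact layerGraph_mono (fun _ _ _ _ => trivial) le_rfl
  · have hdeg : ∀ a : ZMod 4, {b | matchPattern a b}.ncard + {b | matchPattern b a}.ncard +
        ((⊥ : SimpleGraph (ZMod 4)).neighborSet a).ncard = 1 := by
      simp only [Set.ncard_eq_toFinset_card', Set.toFinset_ofPred, neighborSet_bot]
      decide
    rw [Imatch_eq_layerGraph, ncard_neighborSet_layerGraph h2]
    exact hdeg v.1

theorem isDecompositionF_factor (hm : 3 ≤ m) (hmo : Odd m) :
    IsDecompositionF ((Cm4 m \ Imatch m) ⊔ colK4 m) (factor m) := by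
  have h2 := ZMod.two_ne_zero_of_three_le hm
  rw [Cm4_sdiff_Imatch_sup_colK4 h2, funext (factor_eq_layerGraph m)]
  refine isDecompositionF_layerGraph h2 (fun i a b => ?_) (fun i a b => ?_)
    (fun a b => (columnPart_partition a b).1) (fun a b => (columnPart_partition a b).2)
  · exact (forwardPart_partition _ (parityClass_val_mem_parityClassSteps hm hmo i) a b).1
  · exact (forwardPart_partition _ (parityClass_val_mem_parityClassSteps hm hmo i) a b).2

theorem ncard_neighborSet_crossFactor (h2 : (2 : ZMod m) ≠ 0) (v : ZMod 4 × ZMod m) :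
    ((crossFactor m).neighborSet v).ncard = 2 := by
  have hdeg : ∀ a : ZMod 4, {b | crossPattern a b}.ncard + {b | crossPattern b a}.ncard +
      (crossColumn.neighborSet a).ncard = 2 := by
    simp only [Set.ncard_eq_toFinset_card', Set.toFinset_ofPred]
    decide
  exact (ncard_neighborSet_layerGraph (R := fun _ => crossPattern) h2 v).trans (hdeg v.1)

theorem ncard_neighborSet_columnFactor (h2 : (2 : ZMod m) ≠ 0) (v : ZMod 4 × ZMod m) :
    ((columnFactor m).neighborSet v).ncard = 2 := by
  have hdeg : ∀ a : ZMod 4, {b : ZMod 4 | False}.ncard + {b : ZMod 4 | False}.ncard +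
      (cycleColumn.neighborSet a).ncard = 2 := by
    simp only [Set.ncard_eq_toFinset_card', Set.toFinset_ofPred]
    decide
  exact (ncard_neighborSet_layerGraph (R := fun _ _ _ => False) h2 v).trans (hdeg v.1)

theorem ncard_supp_crossFactor (h1 : (1 : ZMod m) ≠ 0) (v : ZMod 4 × ZMod m) :
    ((crossFactor m).connectedComponentMk v).supp.ncard = 4 := by
  have hR : ∀ (i : ZMod m) a b, crossPattern a b →
      (crossOffset a : ZMod m) = 1 + crossOffset b := by
    rintro i a b (⟨rfl, rfl⟩ | ⟨rfl, rfl⟩) <;> simp (config := {decide := true}) [crossOffset]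
  have hH : ∀ a b, crossColumn.Adj a b → (crossOffset a : ZMod m) = crossOffset b := by
    rintro a b ⟨-, (⟨rfl, rfl⟩ | ⟨rfl, rfl⟩) | (⟨rfl, rfl⟩ | ⟨rfl, rfl⟩)⟩ <;>
      simp (config := {decide := true}) [crossOffset]
  have hreach : ∀ (j : ZMod m) a,
      (crossFactor m).Reachable (1, j - crossOffset 1) (a, j - crossOffset a) := by
    intro j a
    have h12 : (crossFactor m).Adj (1, j) (2, j) := layerGraph_adj_of_adj (by decide)
    have h20 : (crossFactor m).Adj (2, j) (0, j + 1) := layerGraph_adj_of_rel h1 (by decide)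
    have h03 : (crossFactor m).Adj (0, j + 1) (3, j + 1) := layerGraph_adj_of_adj (by decide)
    obtain rfl | rfl | rfl | rfl : a = 0 ∨ a = 1 ∨ a = 2 ∨ a = 3 := by decide +revert
    all_goals simp (config := {decide := true}) only [crossOffset, if_true, if_false, sub_zero,
      sub_neg_eq_add]
    · exact h12.reachable.trans h20.reachable
    · rfl
    · exact h12.reachable
    · exact (h12.reachable.trans h20.reachable).trans h03.reachable
  rw [crossFactor, ncard_supp_layerGraph_of_offset crossOffset hR hH 1 hreach, Nat.card_zmod]

theorem ncard_supp_columnFactor (v : ZMod 4 × ZMod m) :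
    ((columnFactor m).connectedComponentMk v).supp.ncard = 4 := by
  have hreach : ∀ (j : ZMod m) a, (columnFactor m).Reachable (0, j - 0) (a, j - 0) := by
    intro j a
    have h01 : (columnFactor m).Adj (0, j - 0) (1, j - 0) := layerGraph_adj_of_adj (by decide)
    have h13 : (columnFactor m).Adj (1, j - 0) (3, j - 0) := layerGraph_adj_of_adj (by decide)
    have h02 : (columnFactor m).Adj (0, j - 0) (2, j - 0) := layerGraph_adj_of_adj (by decide)
    obtain rfl | rfl | rfl | rfl : a = 0 ∨ a = 1 ∨ a = 2 ∨ a = 3 := by decide +revert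
    · rfl
    · exact h01.reachable
    · exact h02.reachable
    · exact h01.reachable.trans h13.reachable
  rw [columnFactor, ncard_supp_layerGraph_of_offset (fun _ => 0) (fun _ _ _ h => h.elim)
    (fun _ _ _ => rfl) 0 hreach, Nat.card_zmod]

end Main

/-- For odd `m ≥ 3`, `I` is a perfect matching of `C_m[4]` and
`(C_m[4] − I) ⊕ mK_4` has a 2-factorization into two `C_4`-factors and
three `C_m`-factors. -/
theorem stmt_6 (m : ℕ) (hm : 3 ≤ m) (hmo : Odd m) :
    IsPM (Cm4 m) (Imatch m) ∧
    ∃ F : Fin 5 → SimpleGraph (ZMod 4 × ZMod m),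
      IsDecompositionF ((Cm4 m \ Imatch m) ⊔ colK4 m) F ∧
      IsCnFactor ((Cm4 m \ Imatch m) ⊔ colK4 m) (F 0) 4 ∧
      IsCnFactor ((Cm4 m \ Imatch m) ⊔ colK4 m) (F 1) 4 ∧
      IsCnFactor ((Cm4 m \ Imatch m) ⊔ colK4 m) (F 2) m ∧
      IsCnFactor ((Cm4 m \ Imatch m) ⊔ colK4 m) (F 3) m ∧
      IsCnFactor ((Cm4 m \ Imatch m) ⊔ colK4 m) (F 4) m := by
  have h2 := ZMod.two_ne_zero_of_three_le hm
  have h1 := one_ne_zero_of_two_ne_zero h2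
  have : NeZero m := ⟨by omega⟩
  have hdec := isDecompositionF_factor hm hmo
  refine ⟨isPM_Cm4_Imatch h2, factor m, hdec,
    ⟨hdec.1 0, ncard_neighborSet_crossFactor h2, ncard_supp_crossFactor h1⟩,
    ⟨hdec.1 1, ncard_neighborSet_columnFactor h2, ncard_supp_columnFactor⟩,
    ⟨hdec.1 2, ncard_neighborSet_shiftGraph h2 _, ncard_supp_shiftGraph h1 _⟩,
    ⟨hdec.1 3, ncard_neighborSet_shiftGraph h2 _, ncard_supp_shiftGraph h1 _⟩,
    ⟨hdec.1 4, ncard_neighborSet_shiftGraph h2 _, ncard_supp_shiftGraph h1 _⟩⟩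
end

section
/- For every odd integer m ≥ 3 and every odd positive integer t, the complete graph K_{4mt} minus a perfect matching decomposes into (mt−1)/2 edge-disjoint spanning subgraphs each isomorphic to t vertex-disjoint copies of C_m[4], together with one spanning subgraph consisting of mt vertex-disjoint 4-cycles. Equivalently, K_{4mt} − I ≅ (mt−1)/2 · (t·C_m[4]) ⊕ mt·C_4, provided K_{mt} has a C_m-factorization. -/
open SimpleGraph

/-- `t` vertex-disjoint copies of a graph `G`. -/
def copies {V : Type*} (t : ℕ) (G : SimpleGraph V) : SimpleGraph (Fin t × V) where
  Adj u v := u.1 = v.1 ∧ G.Adj u.2 v.2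
  symm := ⟨fun _ _ h => ⟨h.1.symm, G.symm.symm _ _ h.2⟩⟩
  loopless := ⟨fun u h => G.loopless.irrefl u.2 h.2⟩

/-!
Identify the vertices with `Fin (m * t) × ZMod 4`, the fibres of the first projection being
`mt` groups of four, and let `I` join `(x, a)` to `(x, a + 2)`. Then `K_{4mt} - I` is the
edge-disjoint union of the blow-up `K_{mt}[4]` (all edges between different groups) and the `mt`
within-group 4-cycles. Blowing up the given `C_m`-factorization of `K_{mt}` decomposes
`K_{mt}[4]`, and a `C_m`-factor, being `t` disjoint `m`-cycles, blows up to `t · C_m[4]`.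
-/

namespace SimpleGraph

variable {α β : Type*}

lemma comap_sdiff (f : α → β) (G H : SimpleGraph β) :
    (G \ H).comap f = G.comap f \ H.comap f :=
  rfl

lemma ncard_neighborSet_comap_equiv (e : α ≃ β) (G : SimpleGraph β) (v : α) :
    ((G.comap e).neighborSet v).ncard = (G.neighborSet (e v)).ncard :=
  Set.ncard_preimage_of_injective_subset_range e.injective
    (e.range_eq_univ ▸ Set.subset_univ _)

lemma ncard_supp_comap_equiv (e : α ≃ β) (G : SimpleGraph β) (v : α) :
    ((G.comap e).connectedComponentMk v).supp.ncard =
      (G.connectedComponentMk (e v)).supp.ncard := by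
  have hsupp : ((G.comap e).connectedComponentMk v).supp =
      e ⁻¹' (G.connectedComponentMk (e v)).supp := by
    ext w
    simp only [Set.mem_preimage, ConnectedComponent.mem_supp_iff, ConnectedComponent.eq]
    exact (Iso.reachable_iff (φ := Iso.comap e G)).symm
  rw [hsupp]
  exact Set.ncard_preimage_of_injective_subset_range e.injective
    (e.range_eq_univ ▸ Set.subset_univ _)

/-- A genuine `m`-cycle only for `3 ≤ m`: for `m = 2` it is a single edge. -/
def zmodCycleGraph (m : ℕ) : SimpleGraph (ZMod m) :=
  fromRel fun i j => j - i = 1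

section zmodCycleGraph

variable {m : ℕ}

lemma zmodCycleGraph_adj [Fact (1 < m)] {i j : ZMod m} :
    (zmodCycleGraph m).Adj i j ↔ j = i + 1 ∨ j = i - 1 := by
  rw [zmodCycleGraph, fromRel_adj]
  constructor
  · rintro ⟨-, h | h⟩
    · exact Or.inl (by rw [← h]; ring)
    · exact Or.inr (by rw [← h]; ring)
  · rintro (rfl | rfl)
    · exact ⟨by simp, Or.inl (by ring)⟩
    · exact ⟨by simp [eq_sub_iff_add_eq], Or.inr (by ring)⟩

lemma zmodCycleGraph_neighborSet [Fact (1 < m)] (i : ZMod m) :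
    (zmodCycleGraph m).neighborSet i = {i + 1, i - 1} := by
  ext j
  simp [zmodCycleGraph_adj]

lemma ncard_neighborSet_zmodCycleGraph (hm : 3 ≤ m) (i : ZMod m) :
    ((zmodCycleGraph m).neighborSet i).ncard = 2 := by
  have : Fact (1 < m) := ⟨by omega⟩
  rw [zmodCycleGraph_neighborSet]
  refine Set.ncard_pair fun h => ?_
  have h2 : ((2 : ℕ) : ZMod m) = 0 := by
    push_cast
    linear_combination h
  exact absurd (Nat.le_of_dvd two_pos ((ZMod.natCast_eq_zero_iff 2 m).mp h2)) (by omega)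

lemma zmodCycleGraph_reachable [Fact (1 < m)] (i j : ZMod m) :
    (zmodCycleGraph m).Reachable i j := by
  suffices h : ∀ n : ℕ, (zmodCycleGraph m).Reachable 0 n by
    rw [← ZMod.natCast_zmod_val i, ← ZMod.natCast_zmod_val j]
    exact (h _).symm.trans (h _)
  intro n
  induction n with
  | zero => simp
  | succ n ih => exact ih.trans (Adj.reachable (by simp [zmodCycleGraph_adj]))

end zmodCycleGraph

variable {V : Type*} {H : SimpleGraph V}

lemma Walk.IsCycle.injOn_getVert_Iio {u : V} {p : H.Walk u u} (hp : p.IsCycle) :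
    Set.InjOn p.getVert (Set.Iio p.length) := fun i hi j hj hij =>
  hp.getVert_injOn' (by simp only [Set.mem_Iio] at hi; simp only [Set.mem_ofPred_eq]; omega)
    (by simp only [Set.mem_Iio] at hj; simp only [Set.mem_ofPred_eq]; omega) hij

lemma Walk.IsCycle.image_getVert_Iio {u : V} {p : H.Walk u u} (hp : p.IsCycle) :
    p.getVert '' Set.Iio p.length = {w | w ∈ p.support} := by
  ext w
  simp only [Set.mem_image, Set.mem_Iio, Set.mem_ofPred_eq, Walk.mem_support_iff_exists_getVert]
  constructor
  · rintro ⟨n, hn, rfl⟩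
    exact ⟨n, rfl, hn.le⟩
  · rintro ⟨n, rfl, hn⟩
    rcases hn.lt_or_eq with hn | rfl
    · exact ⟨n, hn, rfl⟩
    · exact ⟨0, hp.three_le_length.trans_lt' (by omega), by simp⟩

lemma Walk.IsCycle.ncard_support {u : V} {p : H.Walk u u} (hp : p.IsCycle) :
    {w | w ∈ p.support}.ncard = p.length := by
  rw [← hp.image_getVert_Iio, hp.injOn_getVert_Iio.ncard_image, ← Finset.coe_range,
    Set.ncard_coe_finset, Finset.card_range]

theorem Walk.IsCycle.exists_zmodCycleGraph_embedding [Finite V]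
    (hreg : ∀ v, (H.neighborSet v).ncard = 2) {u : V} {p : H.Walk u u} (hp : p.IsCycle) :
    ∃ f : zmodCycleGraph p.length ↪g H, Set.range f = {w | w ∈ p.support} := by
  have hm := hp.three_le_length
  have : Fact (1 < p.length) := ⟨by omega⟩
  set g : ZMod p.length → V := fun i => p.getVert i.val
  have hg : Function.Injective g := fun i j hij =>
    ZMod.val_injective _ (hp.injOn_getVert_Iio i.val_lt j.val_lt hij)
  -- the walk closes up: `getVert p.length = u = getVert 0`
  have hg_succ : ∀ i, g (i + 1) = p.getVert (i.val + 1) := by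
    intro i
    simp only [g, ZMod.val_add, ZMod.val_one]
    rcases (show i.val + 1 ≤ p.length from i.val_lt).lt_or_eq with h | h
    · rw [Nat.mod_eq_of_lt h]
    · rw [h, Nat.mod_self, Walk.getVert_zero, Walk.getVert_length]
  have hadj : ∀ i, H.Adj (g i) (g (i + 1)) := fun i =>
    hg_succ i ▸ p.adj_getVert_succ i.val_lt
  have hnbr : ∀ i, H.neighborSet (g i) = g '' (zmodCycleGraph p.length).neighborSet i := by
    intro i
    refine (Set.eq_of_subset_of_ncard_le ?_ ?_ (Set.toFinite _)).symm
    · rintro _ ⟨j, hj, rfl⟩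
      rcases zmodCycleGraph_adj.mp hj with rfl | rfl
      · exact hadj i
      · simpa using (hadj (i - 1)).symm
    · rw [hreg, Set.ncard_image_of_injective _ hg, ncard_neighborSet_zmodCycleGraph hm]
  refine ⟨⟨⟨g, hg⟩, fun {i j} => ?_⟩, ?_⟩
  · change H.Adj (g i) (g j) ↔ _
    rw [← mem_neighborSet, hnbr, hg.mem_set_image, mem_neighborSet]
  · rw [← hp.image_getVert_Iio]
    ext w
    constructor
    · rintro ⟨i, rfl⟩
      exact ⟨i.val, i.val_lt, rfl⟩
    · rintro ⟨n, hn, rfl⟩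
      exact ⟨n, by simp [g, ZMod.val_natCast_of_lt hn]⟩

theorem exists_zmodCycleGraph_embedding [Finite V] (hreg : ∀ v, (H.neighborSet v).ncard = 2)
    {m : ℕ} (c : H.ConnectedComponent) (hc : c.supp.ncard = m) :
    ∃ f : zmodCycleGraph m ↪g H, Set.range f = c.supp := by
  induction c using ConnectedComponent.ind with | h v => ?_
  obtain ⟨p, hp, hverts⟩ := IsCycles.exists_cycle_toSubgraph_verts_eq_connectedComponentSupp
    (fun w _ => hreg w) (ConnectedComponent.connectedComponentMk_mem (v := v))
    (Set.nonempty_of_ncard_ne_zero (by rw [hreg]; exact two_ne_zero))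
  rw [Walk.verts_toSubgraph] at hverts
  obtain rfl : p.length = m := by rw [← hc, ← hverts, hp.ncard_support]
  rw [← hverts]
  exact hp.exists_zmodCycleGraph_embedding hreg

theorem nonempty_iso_copies_zmodCycleGraph [Finite V] {m t : ℕ} (hm : 0 < m)
    (hreg : ∀ v, (H.neighborSet v).ncard = 2)
    (hcomp : ∀ v, (H.connectedComponentMk v).supp.ncard = m) (hcard : Nat.card V = m * t) :
    Nonempty (copies t (zmodCycleGraph m) ≃g H) := by
  choose f hf using fun c : H.ConnectedComponent =>
    exists_zmodCycleGraph_embedding hreg c (ConnectedComponent.ind hcomp c)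
  have hmk : ∀ c i, H.connectedComponentMk (f c i) = c := fun c i =>
    (c.mem_supp_iff _).mp (hf c ▸ Set.mem_range_self i)
  have hbij : Function.Bijective fun x : H.ConnectedComponent × ZMod m => f x.1 x.2 := by
    refine ⟨fun ⟨c, i⟩ ⟨d, j⟩ h => ?_, fun v => ?_⟩
    · change f c i = f d j at h
      obtain rfl : c = d := by rw [← hmk c i, h, hmk d j]
      exact Prod.ext rfl ((f c).injective h)
    · obtain ⟨i, hi⟩ : v ∈ Set.range (f (H.connectedComponentMk v)) := by
        rw [hf]; exact ConnectedComponent.connectedComponentMk_mem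
      exact ⟨(_, i), hi⟩
  have hcardC : Nat.card H.ConnectedComponent = t := by
    have h := Nat.card_congr (Equiv.ofBijective _ hbij)
    rw [Nat.card_prod, Nat.card_zmod, hcard, mul_comm] at h
    exact Nat.eq_of_mul_eq_mul_left hm h
  have hadj : ∀ c d i j, H.Adj (f c i) (f d j) ↔ c = d ∧ (zmodCycleGraph m).Adj i j := by
    refine fun c d i j => ⟨fun h => ?_, ?_⟩
    · obtain rfl : c = d := by
        rw [← hmk c i, ← hmk d j]
        exact ConnectedComponent.eq.mpr h.reachable
      exact ⟨rfl, (f c).map_rel_iff.mp h⟩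
    · rintro ⟨rfl, h⟩
      exact (f c).map_rel_iff.mpr h
  set ε := (Finite.equivFinOfCardEq hcardC).symm
  refine ⟨⟨(ε.prodCongr (Equiv.refl _)).trans (Equiv.ofBijective _ hbij), fun {a b} => ?_⟩⟩
  change H.Adj (f (ε a.1) a.2) (f (ε b.1) b.2) ↔ a.1 = b.1 ∧ _
  rw [hadj, ε.injective.eq_iff]

end SimpleGraph

section Transfer

variable {α β : Type*}

lemma IsPM.comap {G I : SimpleGraph β} (h : IsPM G I) (e : α ≃ β) :
    IsPM (G.comap e) (I.comap e) :=
  ⟨fun _ _ hadj => h.1 hadj, fun v => (ncard_neighborSet_comap_equiv e I v).trans (h.2 (e v))⟩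

lemma IsCnFactor.comap {G H : SimpleGraph β} {k : ℕ} (h : IsCnFactor G H k) (e : α ≃ β) :
    IsCnFactor (G.comap e) (H.comap e) k :=
  ⟨fun _ _ hadj => h.1 hadj,
    fun v => (ncard_neighborSet_comap_equiv e H v).trans (h.2.1 (e v)),
    fun v => (ncard_supp_comap_equiv e H v).trans (h.2.2 (e v))⟩

lemma IsDecompositionF.comap {n : ℕ} {G : SimpleGraph β} {F : Fin n → SimpleGraph β}
    (h : IsDecompositionF G F) (f : α → β) :
    IsDecompositionF (G.comap f) fun i => (F i).comap f := by
  obtain ⟨hle, hdisj, hsup⟩ := h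
  refine ⟨fun i _ _ hadj => hle i hadj, fun i j hij => ?_, ?_⟩
  · change (F i ⊓ F j).comap f = ⊥
    rw [hdisj i j hij, comap_bot]
  · ext u v
    simp only [iSup_adj, comap_adj, ← hsup]

lemma IsDecompositionF.snoc {n : ℕ} {G H : SimpleGraph α} {F : Fin n → SimpleGraph α}
    (h : IsDecompositionF G F) (hGH : Disjoint G H) :
    IsDecompositionF (G ⊔ H) (Fin.snoc (α := fun _ => SimpleGraph α) F H) := by
  obtain ⟨hle, hdisj, hsup⟩ := h
  have hdisjH : ∀ i, F i ⊓ H = ⊥ := fun i => disjoint_iff.mp (hGH.mono_left (hle i))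
  refine ⟨fun i => ?_, fun i j hij => ?_, ?_⟩
  · rcases Fin.eq_castSucc_or_eq_last i with ⟨i, rfl⟩ | rfl
    · simpa using (hle i).trans le_sup_left
    · simp
  · rcases Fin.eq_castSucc_or_eq_last i with ⟨i, rfl⟩ | rfl <;>
      rcases Fin.eq_castSucc_or_eq_last j with ⟨j, rfl⟩ | rfl
    · simpa using hdisj i j (fun h => hij (congrArg _ h))
    · simpa using hdisjH i
    · simpa [inf_comm] using hdisjH j
    · exact absurd rfl hij
  · ext u v
    simp [iSup_adj, Fin.exists_fin_succ', ← hsup]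

end Transfer

section Copies

variable {V W A : Type*} {t : ℕ}

@[simp]
lemma copies_adj {G : SimpleGraph V} {u v : Fin t × V} :
    (copies t G).Adj u v ↔ u.1 = v.1 ∧ G.Adj u.2 v.2 :=
  Iff.rfl

lemma ncard_neighborSet_copies (G : SimpleGraph V) (v : Fin t × V) :
    ((copies t G).neighborSet v).ncard = (G.neighborSet v.2).ncard := by
  have : (copies t G).neighborSet v = Prod.mk v.1 '' G.neighborSet v.2 := by
    ext ⟨s, w⟩
    simp [eq_comm, and_comm]
  rw [this, Set.ncard_image_of_injective _ (Prod.mk_right_injective v.1)]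

lemma reachable_copies_iff {G : SimpleGraph V} {u v : Fin t × V} :
    (copies t G).Reachable u v ↔ u.1 = v.1 ∧ G.Reachable u.2 v.2 := by
  constructor
  · rintro ⟨p⟩
    induction p with
    | nil => exact ⟨rfl, .refl _⟩
    | cons h _ ih => exact ⟨h.1.trans ih.1, h.2.reachable.trans ih.2⟩
  · obtain ⟨s, x⟩ := u
    obtain ⟨s', y⟩ := v
    rintro ⟨rfl, h⟩
    exact h.map (⟨Prod.mk s, fun h => ⟨rfl, h⟩⟩ : G →g copies t G)

lemma ncard_supp_copies (G : SimpleGraph V) (v : Fin t × V) :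
    ((copies t G).connectedComponentMk v).supp.ncard =
      (G.connectedComponentMk v.2).supp.ncard := by
  have : ((copies t G).connectedComponentMk v).supp =
      Prod.mk v.1 '' (G.connectedComponentMk v.2).supp := by
    ext ⟨s, w⟩
    simp [ConnectedComponent.mem_supp_iff, ConnectedComponent.eq, reachable_copies_iff,
      reachable_comm, eq_comm, and_comm]
  rw [this, Set.ncard_image_of_injective _ (Prod.mk_right_injective v.1)]

lemma isCnFactor_copies_zmodCycleGraph {k : ℕ} (hk : 3 ≤ k) {G : SimpleGraph (Fin t × ZMod k)}
    (hle : copies t (zmodCycleGraph k) ≤ G) : IsCnFactor G (copies t (zmodCycleGraph k)) k := by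
  have : Fact (1 < k) := ⟨by omega⟩
  refine ⟨hle, fun v => ?_, fun v => ?_⟩
  · rw [ncard_neighborSet_copies, ncard_neighborSet_zmodCycleGraph hk]
  · have hsupp : ((zmodCycleGraph k).connectedComponentMk v.2).supp = Set.univ := by
      ext i
      simpa [ConnectedComponent.eq] using zmodCycleGraph_reachable i v.2
    rw [ncard_supp_copies, hsupp, Set.ncard_univ, Nat.card_zmod]

def SimpleGraph.Iso.comapFst {H : SimpleGraph V} {C : SimpleGraph W} (φ : copies t C ≃g H) :
    copies t (C.comap (Prod.snd : A × W → W)) ≃g H.comap (Prod.fst : V × A → V) where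
  toFun x := (φ (x.1, x.2.2), x.2.1)
  invFun y := ((φ.symm y.1).1, (y.2, (φ.symm y.1).2))
  left_inv x := by simp
  right_inv y := by simp
  map_rel_iff' := φ.map_rel_iff

end Copies

section Blowup

variable {A : Type*} {N : ℕ}

lemma top_sdiff_copies (M : SimpleGraph A) :
    (⊤ : SimpleGraph (Fin N × A)) \ copies N M =
      (⊤ : SimpleGraph (Fin N)).comap Prod.fst ⊔ copies N Mᶜ := by
  ext ⟨s, a⟩ ⟨s', b⟩
  by_cases h : s = s'
  · subst h
    simp
  · simp [h]

lemma disjoint_comap_fst_copies (G : SimpleGraph (Fin N)) (K : SimpleGraph A) :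
    Disjoint (G.comap Prod.fst) (copies N K) := by
  rw [disjoint_iff]
  ext u v
  simp only [inf_adj, comap_adj, copies_adj, bot_adj, iff_false, not_and]
  exact fun h hfst _ => h.ne hfst

end Blowup

def zmod4Antipodal : SimpleGraph (ZMod 4) :=
  fromRel fun a b => b = a + 2

lemma compl_zmod4Antipodal : zmod4Antipodalᶜ = zmodCycleGraph 4 := by
  ext a b
  simp only [compl_adj, zmod4Antipodal, zmodCycleGraph, fromRel_adj]
  revert a b
  decide

lemma isPM_copies_zmod4Antipodal (N : ℕ) : IsPM ⊤ (copies N zmod4Antipodal) := by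
  refine ⟨le_top, fun v => ?_⟩
  have : zmod4Antipodal.neighborSet v.2 = {v.2 + 2} := by
    ext b
    simp only [mem_neighborSet, zmod4Antipodal, fromRel_adj, Set.mem_singleton_iff]
    revert b
    generalize v.2 = a
    revert a
    decide
  rw [ncard_neighborSet_copies, this, Set.ncard_singleton]

lemma Cm4_eq_comap_snd {m : ℕ} (hm : 1 < m) : Cm4 m = (zmodCycleGraph m).comap Prod.snd := by
  have : Fact (1 < m) := ⟨hm⟩
  ext u v
  simp only [Cm4, zmodCycleGraph, fromRel_adj, comap_adj]
  refine ⟨fun ⟨_, h⟩ => ⟨fun he => ?_, h⟩,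
    fun ⟨hne, h⟩ => ⟨ne_of_apply_ne Prod.snd hne, h⟩⟩
  rw [he, sub_self, or_self] at h
  exact zero_ne_one h

theorem stmt_11_general (m t : ℕ) (hm : 3 ≤ m)
    (hKmt : ∃ F : Fin ((m * t - 1) / 2) → SimpleGraph (Fin (m * t)),
      IsDecompositionF (⊤ : SimpleGraph (Fin (m * t))) F ∧
      ∀ i, IsCnFactor (⊤ : SimpleGraph (Fin (m * t))) (F i) m) :
    ∃ (I : SimpleGraph (Fin (4 * m * t)))
      (F : Fin ((m * t - 1) / 2 + 1) → SimpleGraph (Fin (4 * m * t))),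
      IsPM (⊤ : SimpleGraph (Fin (4 * m * t))) I ∧
      IsDecompositionF ((⊤ : SimpleGraph (Fin (4 * m * t))) \ I) F ∧
      (∀ i : Fin ((m * t - 1) / 2 + 1), (i : ℕ) < (m * t - 1) / 2 →
        Nonempty (F i ≃g copies t (Cm4 m))) ∧
      (∀ i : Fin ((m * t - 1) / 2 + 1), (i : ℕ) = (m * t - 1) / 2 →
        IsCnFactor ((⊤ : SimpleGraph (Fin (4 * m * t))) \ I) (F i) 4) := by
  obtain ⟨F₀, hdec, hfac⟩ := hKmt
  let e : Fin (4 * m * t) ≃ Fin (m * t) × ZMod 4 :=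
    Fintype.equivOfCardEq (by simp only [Fintype.card_fin, Fintype.card_prod, ZMod.card]; ring)
  let I := copies (m * t) zmod4Antipodal
  let F := Fin.snoc (α := fun _ => SimpleGraph (Fin (m * t) × ZMod 4))
    (fun i => (F₀ i).comap Prod.fst) (copies (m * t) (zmodCycleGraph 4))
  have hdecF : IsDecompositionF ((⊤ : SimpleGraph _) \ I) F := by
    rw [top_sdiff_copies, compl_zmod4Antipodal]
    exact (hdec.comap Prod.fst).snoc (disjoint_comap_fst_copies _ _)
  have htop : ((⊤ : SimpleGraph _) \ I).comap e = ⊤ \ I.comap e := by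
    rw [comap_sdiff, comap_top e.injective]
  have hI : IsPM ⊤ (I.comap e) := by
    simpa [comap_top e.injective] using (isPM_copies_zmod4Antipodal _).comap e
  refine ⟨I.comap e, fun i => (F i).comap e, hI,
    htop ▸ hdecF.comap e, fun i hi => ?_, fun i hi => ?_⟩
  · obtain ⟨-, hreg, hcomp⟩ := hfac ⟨i, hi⟩
    obtain ⟨φ⟩ := nonempty_iso_copies_zmodCycleGraph (by omega) hreg hcomp (Nat.card_fin _)
    rw [Cm4_eq_comap_snd (by omega)]
    have hF : F i = (F₀ ⟨i, hi⟩).comap Prod.fst := Fin.snoc_castSucc (i := ⟨i, hi⟩) ..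
    exact ⟨(Iso.comap e _).trans (hF ▸ φ.comapFst.symm)⟩
  · obtain rfl : i = Fin.last _ := Fin.ext hi
    have hle := hdecF.1 (Fin.last _)
    simp only [F, Fin.snoc_last] at hle ⊢
    exact htop ▸ (isCnFactor_copies_zmodCycleGraph (by norm_num) hle).comap e

/-- For odd `m ≥ 3` and odd `t ≥ 1`, provided `K_{mt}` has a `C_m`-factorization,
`K_{4mt}` minus a perfect matching decomposes into `(mt-1)/2` spanning subgraphs
each isomorphic to `t` disjoint copies of `C_m[4]`, together with one `C_4`-factor. -/
theorem stmt_11 (m t : ℕ) (hm : 3 ≤ m) (hmo : Odd m) (ht : 1 ≤ t) (hto : Odd t)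
    (hKmt : ∃ F : Fin ((m * t - 1) / 2) → SimpleGraph (Fin (m * t)),
      IsDecompositionF (⊤ : SimpleGraph (Fin (m * t))) F ∧
      ∀ i, IsCnFactor (⊤ : SimpleGraph (Fin (m * t))) (F i) m) :
    ∃ (I : SimpleGraph (Fin (4 * m * t)))
      (F : Fin ((m * t - 1) / 2 + 1) → SimpleGraph (Fin (4 * m * t))),
      IsPM (⊤ : SimpleGraph (Fin (4 * m * t))) I ∧
      IsDecompositionF ((⊤ : SimpleGraph (Fin (4 * m * t))) \ I) F ∧
      (∀ i : Fin ((m * t - 1) / 2 + 1), (i : ℕ) < (m * t - 1) / 2 →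
        Nonempty (F i ≃g copies t (Cm4 m))) ∧
      (∀ i : Fin ((m * t - 1) / 2 + 1), (i : ℕ) = (m * t - 1) / 2 →
        IsCnFactor ((⊤ : SimpleGraph (Fin (4 * m * t))) \ I) (F i) 4) :=
  stmt_11_general m t hm hKmt
end
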